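/- Let R = ⊕_{n∈ℕ} R_n be an ℕ-graded ring whose underlying additive group is torsion-free over ℤ. Then the kernel of the universal derivation d : R → Ω_{R/R_0} equals R_0. Consequently, if Ω_{R/R_0} = 0 then R = R_0, and R is reduced whenever R_0 is reduced. -/

import Mathlib

/-!
The Euler map `x ↦ ∑ n • xₙ` is an `R₀`-derivation of `R`, so it factors through the universal
derivation `d`. Hence `d x = 0` forces `n • xₙ = 0` for all `n`, and torsion-freeness kills every
component of positive degree.
-/

open DirectSum

section Decomposition

variable {M σ : Type*} [AddCommMonoid M] [SetLike σ M] [AddSubmonoidClass σ M]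
  (ℳ : ℕ → σ) [Decomposition ℳ]

noncomputable def eulerHom : M →+ M :=
  (decomposeAddEquiv ℳ).symm.toAddMonoidHom.comp <|
    (DirectSum.map fun n => n • AddMonoidHom.id (ℳ n)).comp (decomposeAddEquiv ℳ).toAddMonoidHom

theorem decompose_eulerHom (x : M) (n : ℕ) :
    decompose ℳ (eulerHom ℳ x) n = n • decompose ℳ x n := by
  simp [eulerHom]

theorem eulerHom_of_mem {x : M} {i : ℕ} (hx : x ∈ ℳ i) : eulerHom ℳ x = i • x := by
  simp [eulerHom, decompose_of_mem ℳ hx]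

theorem mem_zero_of_eulerHom_eq_zero (htf : ∀ (n : ℕ) (r : M), 0 < n → n • r = 0 → r = 0)
    {x : M} (hx : eulerHom ℳ x = 0) : x ∈ ℳ 0 := by
  have hpos : ∀ n, 0 < n → (decompose ℳ x n : M) = 0 := fun n hn =>
    htf n _ hn <| by
      rw [← AddSubmonoidClass.coe_nsmul, ← decompose_eulerHom, hx, decompose_zero,
        DirectSum.zero_apply, ZeroMemClass.coe_zero]
  have : decompose ℳ x = of _ 0 (decompose ℳ x 0) := by
    ext n
    rcases Nat.eq_zero_or_pos n with rfl | hn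
    · rw [of_eq_same]
    · rw [hpos n hn, of_eq_of_ne _ _ _ hn.ne', ZeroMemClass.coe_zero]
  rw [← (decompose ℳ).symm_apply_apply x, this, decompose_symm_of]
  exact SetLike.coe_mem _

end Decomposition

section GradedRing

variable {R σ : Type*} [Semiring R] [SetLike σ R] [AddSubmonoidClass σ R]
  (𝒜 : ℕ → σ) [GradedRing 𝒜]

theorem eulerHom_mul (a b : R) :
    eulerHom 𝒜 (a * b) = a * eulerHom 𝒜 b + eulerHom 𝒜 a * b := by
  induction a using Decomposition.inductionOn 𝒜 with
  | zero => simp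
  | add a a' ha ha' => simp only [add_mul, map_add, ha, ha']; abel
  | @homogeneous i a =>
    induction b using Decomposition.inductionOn 𝒜 with
    | zero => simp
    | add b b' hb hb' => simp only [mul_add, map_add, hb, hb']; abel
    | @homogeneous j b =>
      rw [eulerHom_of_mem 𝒜 (SetLike.mul_mem_graded a.2 b.2), eulerHom_of_mem 𝒜 b.2,
        eulerHom_of_mem 𝒜 a.2, add_smul, add_comm, mul_smul_comm, smul_mul_assoc]

end GradedRing

section CommRing

variable {R σ : Type*} [CommRing R] [SetLike σ R] [AddSubgroupClass σ R]
  (𝒜 : ℕ → σ) [GradedRing 𝒜]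

noncomputable def eulerDerivation : Derivation (SetLike.GradeZero.subring 𝒜) R R where
  __ := eulerHom 𝒜
  map_smul' c x := by
    change eulerHom 𝒜 (c * x) = c * eulerHom 𝒜 x
    rw [eulerHom_mul, eulerHom_of_mem 𝒜 c.2, zero_smul, zero_mul, add_zero]
  map_one_eq_zero' := by simpa using eulerHom_of_mem 𝒜 SetLike.GradedOne.one_mem
  leibniz' a b := by simp [eulerHom_mul, mul_comm]

theorem eulerDerivation_apply (x : R) : eulerDerivation 𝒜 x = eulerHom 𝒜 x := rfl

theorem KaehlerDifferential.D_eq_zero_iff_mem_gradeZero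
    (htf : ∀ (n : ℕ) (r : R), 0 < n → n • r = 0 → r = 0) (x : R) :
    KaehlerDifferential.D (SetLike.GradeZero.subring 𝒜) R x = 0 ↔ x ∈ 𝒜 0 := by
  refine ⟨fun hx => mem_zero_of_eulerHom_eq_zero 𝒜 htf ?_, fun hx => ?_⟩
  · rw [← eulerDerivation_apply, ← (eulerDerivation 𝒜).liftKaehlerDifferential_comp_D,
      hx, map_zero]
  · exact (KaehlerDifferential.D _ R).map_algebraMap (⟨x, hx⟩ : SetLike.GradeZero.subring 𝒜)

end CommRing

theorem Subring.isReduced_of_forall_mem {R : Type*} [Ring R] (S : Subring R) [IsReduced S]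
    (h : ∀ x, x ∈ S) : IsReduced R := by
  obtain rfl : S = ⊤ := eq_top_iff.mpr fun x _ => h x
  exact isReduced_of_injective Subring.topEquiv.symm Subring.topEquiv.symm.injective

/-- Remark 3.12: if `R` is an `ℕ`-graded ring whose additive group is
`ℤ`-torsion-free, then the kernel of the universal derivation
`d : R → Ω_{R/R₀}` equals `R₀`; consequently `Ω_{R/R₀} = 0` forces
`R = R₀`, and then `R` is reduced whenever `R₀` is reduced. -/
theorem stmt19 (R : Type) [CommRing R] (𝒜 : ℕ → AddSubgroup R) [GradedRing 𝒜]
    (htf : ∀ (n : ℕ) (r : R), 0 < n → n • r = 0 → r = 0) :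
    (∀ x : R,
      KaehlerDifferential.D (SetLike.GradeZero.subring 𝒜) R x = 0 ↔ x ∈ 𝒜 0) ∧
    (Subsingleton (KaehlerDifferential (SetLike.GradeZero.subring 𝒜) R) →
      (∀ x : R, x ∈ 𝒜 0)) ∧
    (Subsingleton (KaehlerDifferential (SetLike.GradeZero.subring 𝒜) R) →
      IsReduced (SetLike.GradeZero.subring 𝒜) → IsReduced R) := by
  have hker := KaehlerDifferential.D_eq_zero_iff_mem_gradeZero 𝒜 htf
  have hall : Subsingleton (KaehlerDifferential (SetLike.GradeZero.subring 𝒜) R) →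
      ∀ x : R, x ∈ 𝒜 0 := fun _ x => (hker x).mp (Subsingleton.elim _ _)
  exact ⟨hker, hall, fun hΩ _ => (SetLike.GradeZero.subring 𝒜).isReduced_of_forall_mem (hall hΩ)⟩
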